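/- For any binary-input DMC W, I(W^-) ≤ I(W) ≤ I(W^+). -/

import Mathlib

open Finset

/-- A discrete channel: nonnegative transition "probabilities" summing to one. -/
def IsChannel {X Y : Type} [Fintype Y] (W : X → Y → ℝ) : Prop :=
  (∀ x y, 0 ≤ W x y) ∧ ∀ x, ∑ y, W x y = 1

/-- `Wd` is (stochastically) degraded with respect to `W`. -/
def Degraded {X Y Z : Type} [Fintype Y] [Fintype Z]
    (Wd : X → Z → ℝ) (W : X → Y → ℝ) : Prop :=
  ∃ P : Y → Z → ℝ, IsChannel P ∧ ∀ x z, Wd x z = ∑ y, P y z * W x y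
/-- Arıkan's minus transform. -/
noncomputable def Wminus {Y : Type} (W : Fin 2 → Y → ℝ) : Fin 2 → Y × Y → ℝ :=
  fun u1 p => ∑ u2 : Fin 2, (1 / 2 : ℝ) * W (u1 + u2) p.1 * W u2 p.2

/-- Arıkan's plus transform. -/
noncomputable def Wplus {Y : Type} (W : Fin 2 → Y → ℝ) : Fin 2 → Y × Y × Fin 2 → ℝ :=
  fun u2 p => (1 / 2 : ℝ) * W (p.2.2 + u2) p.1 * W u2 p.2.1
/-- Bhattacharyya parameter. -/
noncomputable def Zparam {Y : Type} [Fintype Y] (W : Fin 2 → Y → ℝ) : ℝ :=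
  ∑ y, Real.sqrt (W 0 y * W 1 y)

/-- Symmetric capacity (mutual information with uniform input), in bits. -/
noncomputable def Icap {Y : Type} [Fintype Y] (W : Fin 2 → Y → ℝ) : ℝ :=
  ∑ y, ∑ x : Fin 2, (1 / 2 : ℝ) * W x y *
    Real.logb 2 (W x y / ((1 / 2) * W 0 y + (1 / 2) * W 1 y))

/-! Both inequalities are data processing, which for `Icap` is the log-sum inequality (Jensen for
`x log x`). A receiver of `W⁺` that discards `y₁` and `u₁` sees exactly `W`, so `W` is degraded with
respect to `W⁺`. On the minus side, `W⁻` is obtained by forgetting `u₂` from the channel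
`u₁ ↦ (y₁, y₂, u₂)`; given `u₂`, the output `y₂` carries no information and `y₁` is `W` applied to
`u₁ + u₂`, so that channel has capacity exactly `I(W)`. -/

theorem sum_mul_log_div_sum_le {ι : Type*} (s : Finset ι) {a b : ι → ℝ}
    (ha : ∀ i ∈ s, 0 ≤ a i) (hb : ∀ i ∈ s, 0 ≤ b i) (hab : ∀ i ∈ s, b i = 0 → a i = 0) :
    (∑ i ∈ s, a i) * Real.log ((∑ i ∈ s, a i) / ∑ i ∈ s, b i) ≤
      ∑ i ∈ s, a i * Real.log (a i / b i) := by
  set B := ∑ i ∈ s, b i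
  rcases (sum_nonneg hb).eq_or_lt with hB | hB
  · have ha0 : ∀ i ∈ s, a i = 0 := fun i hi =>
      hab i hi ((sum_eq_zero_iff_of_nonneg hb).1 hB.symm i hi)
    rw [sum_eq_zero ha0, sum_eq_zero fun i hi => by rw [ha0 i hi, zero_mul], zero_mul]
  have hw : ∀ i ∈ s, b i / B * (a i / b i) = a i / B := fun i hi => by
    rcases eq_or_ne (b i) 0 with h | h
    · simp [h, hab i hi h]
    · field_simp
  have jensen := Real.convexOn_mul_log.map_sum_le (t := s) (w := fun i => b i / B)
    (p := fun i => a i / b i) (fun i hi => div_nonneg (hb i hi) hB.le)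
    (by rw [← sum_div, div_self hB.ne']) (fun i hi => div_nonneg (ha i hi) (hb i hi))
  have hrhs : ∑ i ∈ s, b i / B * (a i / b i * Real.log (a i / b i)) =
      (∑ i ∈ s, a i * Real.log (a i / b i)) / B := by
    rw [sum_div]
    exact sum_congr rfl fun i hi => by rw [← mul_assoc, hw i hi, div_mul_eq_mul_div]
  simp only [smul_eq_mul] at jensen
  rw [sum_congr rfl hw, ← sum_div, hrhs, div_mul_eq_mul_div,
    div_le_div_iff_of_pos_right hB] at jensen
  exact jensen

theorem sum_mul_logb_div_sum_le {ι : Type*} (s : Finset ι) {c : ℝ} (hc : 1 ≤ c) {a b : ι → ℝ}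
    (ha : ∀ i ∈ s, 0 ≤ a i) (hb : ∀ i ∈ s, 0 ≤ b i) (hab : ∀ i ∈ s, b i = 0 → a i = 0) :
    (∑ i ∈ s, a i) * Real.logb c ((∑ i ∈ s, a i) / ∑ i ∈ s, b i) ≤
      ∑ i ∈ s, a i * Real.logb c (a i / b i) := by
  simp only [Real.logb, ← mul_div_assoc, ← sum_div]
  exact div_le_div_of_nonneg_right (sum_mul_log_div_sum_le s ha hb hab) (Real.log_nonneg hc)

theorem mul_mul_logb_mul_div_mul {c : ℝ} (hc : 0 ≤ c) (base a b : ℝ) :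
    c * a * Real.logb base (c * a / (c * b)) = c * (a * Real.logb base (a / b)) := by
  rcases hc.eq_or_lt with rfl | hc
  · simp
  · rw [mul_div_mul_left _ _ hc.ne', mul_assoc]

theorem Icap_le_of_degraded {Y Z : Type} [Fintype Y] [Fintype Z] {Wd : Fin 2 → Z → ℝ}
    {W : Fin 2 → Y → ℝ} (hW : ∀ x y, 0 ≤ W x y) (h : Degraded Wd W) : Icap Wd ≤ Icap W := by
  obtain ⟨P, ⟨hP, hPsum⟩, hWd⟩ := h
  set m : Y → ℝ := fun y => (1 / 2) * W 0 y + (1 / 2) * W 1 y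
  have hm : ∀ z, (1 / 2) * Wd 0 z + (1 / 2) * Wd 1 z = ∑ y, P y z * m y := fun z => by
    simp only [hWd, m, mul_sum, mul_add, ← sum_add_distrib]
    exact sum_congr rfl fun y _ => by ring
  have hm_nonneg : ∀ y, 0 ≤ m y := fun y => by simp only [m]; linarith [hW 0 y, hW 1 y]
  have hm0 : ∀ y, m y = 0 → ∀ x, W x y = 0 := fun y h => by
    simp only [m] at h
    exact Fin.forall_fin_two.2 ⟨by linarith [hW 0 y, hW 1 y], by linarith [hW 0 y, hW 1 y]⟩
  have key : ∀ x z, Wd x z * Real.logb 2 (Wd x z / ((1 / 2) * Wd 0 z + (1 / 2) * Wd 1 z)) ≤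
      ∑ y, P y z * (W x y * Real.logb 2 (W x y / m y)) := fun x z => by
    rw [hm, hWd]
    calc _ ≤ ∑ y, P y z * W x y * Real.logb 2 (P y z * W x y / (P y z * m y)) :=
          sum_mul_logb_div_sum_le univ one_le_two (fun y _ => mul_nonneg (hP y z) (hW x y))
            (fun y _ => mul_nonneg (hP y z) (hm_nonneg y))
            (fun y _ h => by
              rcases mul_eq_zero.1 h with h | h
              · rw [h, zero_mul]
              · rw [hm0 y h x, mul_zero])
      _ = _ := sum_congr rfl fun y _ => mul_mul_logb_mul_div_mul (hP y z) _ _ _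
  calc Icap Wd
      = ∑ z, ∑ x : Fin 2, (1 / 2) *
          (Wd x z * Real.logb 2 (Wd x z / ((1 / 2) * Wd 0 z + (1 / 2) * Wd 1 z))) := by
        simp only [Icap, mul_assoc]
    _ ≤ ∑ z, ∑ x : Fin 2, (1 / 2) * ∑ y, P y z * (W x y * Real.logb 2 (W x y / m y)) := by
        gcongr with z _ x _
        exact key x z
    _ = ∑ y, ∑ x : Fin 2, (1 / 2) * (W x y * Real.logb 2 (W x y / m y)) * ∑ z, P y z := by
        simp only [mul_sum]
        rw [sum_comm_cycle]
        refine sum_congr rfl fun y _ => ?_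
        rw [sum_comm]
        exact sum_congr rfl fun x _ => sum_congr rfl fun z _ => by ring
    _ = Icap W := by simp only [hPsum, mul_one, Icap, mul_assoc, m]

theorem Icap_comp_perm {Y : Type} [Fintype Y] (W : Fin 2 → Y → ℝ) (σ : Equiv.Perm (Fin 2)) :
    Icap (fun x => W (σ x)) = Icap W := by
  have hmean : ∀ y, (1 / 2) * W (σ 0) y + (1 / 2) * W (σ 1) y =
      (1 / 2) * W 0 y + (1 / 2) * W 1 y := fun y => by
    simpa only [Fin.sum_univ_two] using Equiv.sum_comp σ (fun x => (1 / 2) * W x y)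
  simp only [Icap, hmean]
  exact sum_congr rfl fun y _ => Equiv.sum_comp σ
    (fun x => (1 / 2) * W x y * Real.logb 2 (W x y / ((1 / 2) * W 0 y + (1 / 2) * W 1 y)))

theorem Icap_mixture {Y S : Type} [Fintype Y] [Fintype S] {π : S → ℝ} (hπ : ∀ s, 0 ≤ π s)
    (V : S → Fin 2 → Y → ℝ) :
    Icap (fun x (p : Y × S) => π p.2 * V p.2 x p.1) = ∑ s, π s * Icap (V s) := by
  have hterm : ∀ x y s, (1 / 2) * (π s * V s x y) *
      Real.logb 2 (π s * V s x y / ((1 / 2) * (π s * V s 0 y) + (1 / 2) * (π s * V s 1 y))) =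
      π s * ((1 / 2) * V s x y * Real.logb 2 (V s x y / ((1 / 2) * V s 0 y + (1 / 2) * V s 1 y))) :=
    fun x y s => by
      rw [show (1 / 2) * (π s * V s 0 y) + (1 / 2) * (π s * V s 1 y) =
          π s * ((1 / 2) * V s 0 y + (1 / 2) * V s 1 y) by ring, mul_assoc,
        mul_mul_logb_mul_div_mul (hπ s)]
      ring
  simp only [Icap, hterm, Fintype.sum_prod_type, ← mul_sum]
  rw [sum_comm]
  simp only [mul_sum]

theorem degraded_self_Wplus {Y : Type} [Fintype Y] {W : Fin 2 → Y → ℝ} (hW : IsChannel W) :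
    Degraded W (Wplus W) := by
  classical
  refine ⟨fun q y => if q.2.1 = y then 1 else 0, ⟨fun q y => ite_nonneg zero_le_one le_rfl,
    fun q => by simp⟩, fun x y => ?_⟩
  simp only [Wplus, Fintype.sum_prod_type, ite_mul, one_mul, zero_mul, sum_ite_irrel,
    sum_const_zero, sum_ite_eq', mem_univ, if_true]
  rw [sum_comm]
  simp only [← sum_mul, ← mul_sum, hW.2, Fin.sum_univ_two]
  ring

/-- `W⁻` with `u₂` revealed to the receiver. -/
noncomputable def WminusAided {Y : Type} (W : Fin 2 → Y → ℝ) : Fin 2 → Y × Y × Fin 2 → ℝ :=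
  fun u1 p => (1 / 2 * W p.2.2 p.2.1) * W (u1 + p.2.2) p.1

theorem degraded_Wminus_WminusAided {Y : Type} [Fintype Y] (W : Fin 2 → Y → ℝ) :
    Degraded (Wminus W) (WminusAided W) := by
  classical
  refine ⟨fun q z => if (q.1, q.2.1) = z then 1 else 0, ⟨fun q z => ite_nonneg zero_le_one le_rfl,
    fun q => by simp⟩, fun x z => ?_⟩
  simp only [Wminus, WminusAided, Fintype.sum_prod_type, Prod.ext_iff, ite_mul, one_mul, zero_mul,
    ite_and, sum_ite_irrel, sum_const_zero, sum_ite_eq', mem_univ, if_true]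
  exact sum_congr rfl fun u2 _ => by ring

theorem Icap_WminusAided {Y : Type} [Fintype Y] {W : Fin 2 → Y → ℝ} (hW : IsChannel W) :
    Icap (WminusAided W) = Icap W := by
  have hπ : ∑ s : Y × Fin 2, 1 / 2 * W s.2 s.1 = 1 := by
    rw [Fintype.sum_prod_type, sum_comm]
    simp [← mul_sum, hW.2]
  calc Icap (WminusAided W)
      = ∑ s : Y × Fin 2, 1 / 2 * W s.2 s.1 * Icap (fun x => W (x + s.2)) :=
        Icap_mixture (π := fun s : Y × Fin 2 => 1 / 2 * W s.2 s.1)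
          (fun s => mul_nonneg (by norm_num) (hW.1 s.2 s.1)) (fun s x => W (x + s.2))
    _ = Icap W := by
        have hperm : ∀ u : Fin 2, Icap (fun x => W (x + u)) = Icap W := fun u =>
          Icap_comp_perm W (Equiv.addRight u)
        simp only [hperm, ← sum_mul, hπ, one_mul]

/-- `I(W⁻) ≤ I(W) ≤ I(W⁺)`. -/
theorem capacity_polarization {Y : Type} [Fintype Y]
    (W : Fin 2 → Y → ℝ) (hW : IsChannel W) :
    Icap (Wminus W) ≤ Icap W ∧ Icap W ≤ Icap (Wplus W) :=
  ⟨(Icap_le_of_degraded (fun x q => mul_nonneg (mul_nonneg (by norm_num) (hW.1 _ _)) (hW.1 _ _))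
      (degraded_Wminus_WminusAided W)).trans_eq (Icap_WminusAided hW),
    Icap_le_of_degraded (fun x q => mul_nonneg (mul_nonneg (by norm_num) (hW.1 _ _)) (hW.1 _ _))
      (degraded_self_Wplus hW)⟩
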